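/- arXiv:math/0309216 — 2 statements merged into one kernel-verified Lean document; each statement's English description precedes it below -/
import Mathlib

section
/- Let n ≥ 2 and let G be a real symmetric (n+1)×(n+1) matrix with G_{ii} = 1 for all i and G_{ij} ∈ [−1, 1) for all i ≠ j. Assume that G has exactly n positive eigenvalues and exactly one negative eigenvalue (counted with multiplicity), and that every off-diagonal cofactor satisfies c_{ij} > 0 for i ≠ j. Then there exist vectors u_1, …, u_{n+1} ∈ ℝ^{n+1} with ⟨u_i, u_j⟩ = G_{ij} for all i, j (in particular each u_i is unit spacelike), such that, setting w_i := Σ_{k=1}^{n+1} c_{ik} u_k and v_i := w_i / √|c_{ii} · det G| if c_{ii} ≠ 0 and v_i := w_i if c_{ii} = 0, the vectors v_1, …, v_{n+1} are linearly independent, satisfy ⟨v_i, v_j⟩ < 0 for all i ≠ j, and satisfy ⟨v_i, v_i⟩ = −1 if c_{ii} > 0, ⟨v_i, v_i⟩ = 0 with v_i ≠ 0 if c_{ii} = 0, and ⟨v_i, v_i⟩ = 1 if c_{ii} < 0. -/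
/-!
Diagonalising `G` orthogonally and using the square roots of the absolute values of its
eigenvalues as coordinates, with the unique negative eigenvalue on the timelike axis, realises `G`
as the Lorentzian Gram matrix of vectors `u i`. The identity `G * adjugate G = det G • 1` then says
`⟨w i, u j⟩ = det G · δᵢⱼ`, hence `⟨w i, w j⟩ = c_{ji} · det G`. Since `det G < 0` (product of the
eigenvalues) and `c_{ij} > 0` off the diagonal, the `v i`, positive multiples of the `w i`, have
negative pairwise products and the stated norms, and they are independent because the `u j` pair
with them diagonally.
-/

noncomputable section
open Matrix BigOperators

/-- The Lorentzian inner product on `ℝ^{n+1}`: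
`⟨x, y⟩ = -x₀y₀ + x₁y₁ + ⋯ + xₙyₙ`. -/
def lform {n : ℕ} (x y : Fin (n + 1) → ℝ) : ℝ :=
  ∑ i, (if i = 0 then (-1 : ℝ) else 1) * x i * y i

/-- The `(i,j)` cofactor of a square matrix: `(-1)^(i+j)` times the determinant
of the matrix obtained by deleting the `i`-th row and the `j`-th column. -/
def cofactor {n : ℕ} (G : Matrix (Fin (n + 1)) (Fin (n + 1)) ℝ) (i j : Fin (n + 1)) : ℝ :=
  (-1 : ℝ) ^ ((i : ℕ) + (j : ℕ)) * (G.submatrix i.succAbove j.succAbove).det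

section LorentzForm

variable {n : ℕ}

theorem lform_comm (x y : Fin (n + 1) → ℝ) : lform x y = lform y x :=
  Finset.sum_congr rfl fun _ _ => by ring

@[simp]
theorem lform_zero_left (y : Fin (n + 1) → ℝ) : lform 0 y = 0 := by
  simp [lform]

theorem lform_smul_left (c : ℝ) (x y : Fin (n + 1) → ℝ) : lform (c • x) y = c * lform x y := by
  simp only [lform, Finset.mul_sum, Pi.smul_apply, smul_eq_mul]
  exact Finset.sum_congr rfl fun _ _ => by ring

theorem lform_smul_right (c : ℝ) (x y : Fin (n + 1) → ℝ) : lform x (c • y) = c * lform x y := by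
  rw [lform_comm, lform_smul_left, lform_comm]

theorem lform_sum_left {ι : Type*} (s : Finset ι) (f : ι → Fin (n + 1) → ℝ)
    (y : Fin (n + 1) → ℝ) : lform (∑ k ∈ s, f k) y = ∑ k ∈ s, lform (f k) y := by
  simp only [lform, Finset.sum_apply, Finset.mul_sum, Finset.sum_mul]
  exact Finset.sum_comm

theorem lform_sum_right {ι : Type*} (s : Finset ι) (x : Fin (n + 1) → ℝ)
    (f : ι → Fin (n + 1) → ℝ) : lform x (∑ k ∈ s, f k) = ∑ k ∈ s, lform x (f k) := by
  simp only [lform_comm x, lform_sum_left]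

def lnormalize (x : Fin (n + 1) → ℝ) : Fin (n + 1) → ℝ :=
  if lform x x ≠ 0 then (√|lform x x|)⁻¹ • x else x

theorem exists_pos_lnormalize_eq_smul (x : Fin (n + 1) → ℝ) :
    ∃ c : ℝ, 0 < c ∧ lnormalize x = c • x := by
  by_cases hx : lform x x ≠ 0
  · exact ⟨_, inv_pos.2 (Real.sqrt_pos.2 (abs_pos.2 hx)), if_pos hx⟩
  · exact ⟨1, one_pos, by rw [lnormalize, if_neg hx, one_smul]⟩

theorem lform_lnormalize_self (x : Fin (n + 1) → ℝ) :
    lform (lnormalize x) (lnormalize x) = lform x x / |lform x x| := by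
  by_cases hx : lform x x ≠ 0
  · rw [lnormalize, if_pos hx, lform_smul_left, lform_smul_right, ← mul_assoc, ← mul_inv,
      Real.mul_self_sqrt (abs_nonneg _), inv_mul_eq_div]
  · rw [lnormalize, if_neg hx, not_not.1 hx, zero_div]

theorem linearIndependent_of_lform_eq_ite {ι : Type*} [Fintype ι] [DecidableEq ι]
    {v u : ι → Fin (n + 1) → ℝ} {d : ι → ℝ} (hd : ∀ i, d i ≠ 0)
    (h : ∀ i j, lform (v i) (u j) = if i = j then d i else 0) : LinearIndependent ℝ v := by
  refine Fintype.linearIndependent_iff.2 fun g hg j => ?_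
  have hpair : lform (∑ i, g i • v i) (u j) = g j * d j := by
    simp only [lform_sum_left, lform_smul_left, h, mul_ite, mul_zero, Finset.sum_ite_eq',
      Finset.mem_univ, if_true]
  rw [hg, lform_zero_left] at hpair
  exact (mul_eq_zero.1 hpair.symm).resolve_right (hd j)

end LorentzForm

theorem exists_neg_and_pos_of_card_filter {n : ℕ} {μ : Fin (n + 1) → ℝ}
    (hpos : (Finset.univ.filter fun i => 0 < μ i).card = n)
    (hneg : (Finset.univ.filter fun i => μ i < 0).card = 1) :
    ∃ i₀, μ i₀ < 0 ∧ ∀ i, i ≠ i₀ → 0 < μ i := by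
  obtain ⟨i₀, hi₀⟩ := Finset.card_eq_one.1 hneg
  have hneg₀ : μ i₀ < 0 := by simpa using Finset.ext_iff.1 hi₀ i₀
  have hnonpos : (Finset.univ.filter fun i => ¬ 0 < μ i) = {i₀} := by
    refine (Finset.eq_of_subset_of_card_le ?_ ?_).symm
    · simpa using hneg₀.le
    · have := Finset.card_filter_add_card_filter_not (s := Finset.univ) (fun i => 0 < μ i)
      rw [Finset.card_univ, Fintype.card_fin, hpos] at this
      rw [Finset.card_singleton]; omega
  refine ⟨i₀, hneg₀, fun i hi => ?_⟩
  by_contra h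
  exact hi (Finset.mem_singleton.1 (hnonpos ▸ Finset.mem_filter.2 ⟨Finset.mem_univ i, h⟩))

theorem Matrix.IsHermitian.apply_eq_sum_eigenvalues {ι : Type*} [Fintype ι] [DecidableEq ι]
    {G : Matrix ι ι ℝ} (hG : G.IsHermitian) (i k : ι) :
    G i k = ∑ j, hG.eigenvectorBasis j i * hG.eigenvalues j * hG.eigenvectorBasis j k := by
  conv_lhs => rw [hG.spectral_theorem, Unitary.conjStarAlgAut_apply, mul_apply]
  simp [mul_diagonal]

theorem Matrix.IsHermitian.det_neg_of_eigenvalues {ι : Type*} [Fintype ι] [DecidableEq ι]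
    {G : Matrix ι ι ℝ} (hG : G.IsHermitian) {i₀ : ι} (hneg : hG.eigenvalues i₀ < 0)
    (hpos : ∀ i, i ≠ i₀ → 0 < hG.eigenvalues i) : G.det < 0 := by
  rw [hG.det_eq_prod_eigenvalues, ← Finset.mul_prod_erase _ _ (Finset.mem_univ i₀)]
  exact mul_neg_of_neg_of_pos hneg
    (Finset.prod_pos fun i hi => hpos i (Finset.ne_of_mem_erase hi))

theorem Matrix.IsHermitian.exists_lform_gram {n : ℕ} {G : Matrix (Fin (n + 1)) (Fin (n + 1)) ℝ}
    (hG : G.IsHermitian) {i₀ : Fin (n + 1)} (hnonpos : hG.eigenvalues i₀ ≤ 0)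
    (hnonneg : ∀ i, i ≠ i₀ → 0 ≤ hG.eigenvalues i) :
    ∃ u : Fin (n + 1) → Fin (n + 1) → ℝ, ∀ i j, lform (u i) (u j) = G i j := by
  let μ := hG.eigenvalues
  let σ := Equiv.swap 0 i₀
  have hsign : ∀ j, (if j = 0 then (-1 : ℝ) else 1) * |μ (σ j)| = μ (σ j) := by
    intro j
    split_ifs with hj
    · rw [hj, Equiv.swap_apply_left, abs_of_nonpos hnonpos, neg_mul, one_mul, neg_neg]
    · rw [one_mul, abs_of_nonneg (hnonneg _ (by simpa [σ, Equiv.swap_apply_eq_iff] using hj))]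
  refine ⟨fun i j => hG.eigenvectorBasis (σ j) i * √|μ (σ j)|, fun i k => ?_⟩
  rw [hG.apply_eq_sum_eigenvalues, ← Equiv.sum_comp σ, lform]
  refine Finset.sum_congr rfl fun j _ => ?_
  linear_combination (hG.eigenvectorBasis (σ j) i * hG.eigenvectorBasis (σ j) k) *
    ((if j = 0 then (-1 : ℝ) else 1) * Real.mul_self_sqrt (abs_nonneg (μ (σ j))) + hsign j)

theorem adjugate_apply_eq_cofactor {n : ℕ} (G : Matrix (Fin (n + 1)) (Fin (n + 1)) ℝ)
    (i j : Fin (n + 1)) : adjugate G i j = cofactor G j i := by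
  rw [adjugate_fin_succ_eq_det_submatrix]
  rfl

theorem sum_mul_cofactor {n : ℕ} (G : Matrix (Fin (n + 1)) (Fin (n + 1)) ℝ) (i j : Fin (n + 1)) :
    ∑ k, G i k * cofactor G j k = if i = j then G.det else 0 := by
  simpa only [mul_apply, adjugate_apply_eq_cofactor, Matrix.smul_apply, one_apply, smul_eq_mul,
    mul_ite, mul_one, mul_zero] using congrFun (congrFun (mul_adjugate G) i) j

section CofactorCombination

variable {n : ℕ} {G : Matrix (Fin (n + 1)) (Fin (n + 1)) ℝ} {u w : Fin (n + 1) → Fin (n + 1) → ℝ}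

theorem lform_cofactor_comb_left (hu : ∀ i j, lform (u i) (u j) = G i j)
    (hw : ∀ i, w i = ∑ k, cofactor G i k • u k) (i j : Fin (n + 1)) :
    lform (w i) (u j) = if i = j then G.det else 0 := by
  have hsymm : ∀ a b, G a b = G b a := fun a b => by rw [← hu, ← hu, lform_comm]
  calc lform (w i) (u j) = ∑ k, G j k * cofactor G i k := by
        rw [hw, lform_sum_left]
        exact Finset.sum_congr rfl fun k _ => by rw [lform_smul_left, hu, hsymm, mul_comm]
    _ = if i = j then G.det else 0 := by rw [sum_mul_cofactor]; exact if_congr eq_comm rfl rfl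

theorem lform_cofactor_comb (hu : ∀ i j, lform (u i) (u j) = G i j)
    (hw : ∀ i, w i = ∑ k, cofactor G i k • u k) (i j : Fin (n + 1)) :
    lform (w i) (w j) = cofactor G j i * G.det := by
  simp only [hw j, lform_sum_right, lform_smul_right, lform_cofactor_comb_left hu hw, mul_ite,
    mul_zero, Finset.sum_ite_eq, Finset.mem_univ, if_true]

end CofactorCombination

theorem stmt0_general (n : ℕ)
    (G : Matrix (Fin (n + 1)) (Fin (n + 1)) ℝ)
    (hG : G.IsHermitian)
    (hpos : (Finset.univ.filter fun i => 0 < hG.eigenvalues i).card = n)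
    (hneg : (Finset.univ.filter fun i => hG.eigenvalues i < 0).card = 1)
    (hcof : ∀ i j, i ≠ j → 0 < cofactor G i j) :
    ∃ u : Fin (n + 1) → (Fin (n + 1) → ℝ),
      (∀ i j, lform (u i) (u j) = G i j) ∧
      ∀ w v : Fin (n + 1) → (Fin (n + 1) → ℝ),
        (∀ i, w i = ∑ k, cofactor G i k • u k) →
        (∀ i, v i = if cofactor G i i ≠ 0
            then (Real.sqrt |cofactor G i i * G.det|)⁻¹ • w i else w i) →
        LinearIndependent ℝ v ∧
        (∀ i j, i ≠ j → lform (v i) (v j) < 0) ∧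
        (∀ i, 0 < cofactor G i i → lform (v i) (v i) = -1) ∧
        (∀ i, cofactor G i i = 0 → lform (v i) (v i) = 0 ∧ v i ≠ 0) ∧
        (∀ i, cofactor G i i < 0 → lform (v i) (v i) = 1) := by
  obtain ⟨i₀, hneg₀, hpos₀⟩ := exists_neg_and_pos_of_card_filter hpos hneg
  have hdet : G.det < 0 := hG.det_neg_of_eigenvalues hneg₀ hpos₀
  obtain ⟨u, hu⟩ := hG.exists_lform_gram hneg₀.le fun i hi => (hpos₀ i hi).le
  refine ⟨u, hu, fun w v hw hv => ?_⟩
  have hwu := lform_cofactor_comb_left hu hw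
  have hww := lform_cofactor_comb hu hw
  have hvn : ∀ i, v i = lnormalize (w i) := fun i => by
    simp only [hv, lnormalize, hww, ne_eq, mul_eq_zero, hdet.ne, or_false]
  choose c hc hvc using fun i => hvn i ▸ exists_pos_lnormalize_eq_smul (w i)
  have hvv : ∀ i j, lform (v i) (v j) = c i * c j * (cofactor G j i * G.det) := fun i j => by
    rw [hvc, hvc, lform_smul_left, lform_smul_right, hww]; ring
  have hvv_self : ∀ i,
      lform (v i) (v i) = cofactor G i i * G.det / |cofactor G i i * G.det| := fun i => by
    rw [hvn, lform_lnormalize_self, hww]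
  have hlin : LinearIndependent ℝ v := by
    refine linearIndependent_of_lform_eq_ite (u := u) (d := fun i => c i * G.det)
      (fun i => mul_ne_zero (hc i).ne' hdet.ne) fun i j => ?_
    rw [hvc, lform_smul_left, hwu, mul_ite, mul_zero]
  refine ⟨hlin, fun i j hij => ?_, fun i hi => ?_, fun i hi => ⟨?_, hlin.ne_zero i⟩, fun i hi => ?_⟩
  · rw [hvv]
    exact mul_neg_of_pos_of_neg (mul_pos (hc i) (hc j))
      (mul_neg_of_pos_of_neg (hcof j i hij.symm) hdet)
  · have ht := mul_neg_of_pos_of_neg hi hdet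
    rw [hvv_self, abs_of_neg ht, div_neg_self ht.ne]
  · rw [hvv_self, hi, zero_mul, zero_div]
  · have ht := mul_pos_of_neg_of_neg hi hdet
    rw [hvv_self, abs_of_pos ht, div_self ht.ne']

theorem stmt0 (n : ℕ) (hn : 2 ≤ n)
    (G : Matrix (Fin (n + 1)) (Fin (n + 1)) ℝ)
    (hG : G.IsHermitian)
    (hdiag : ∀ i, G i i = 1)
    (hoff : ∀ i j, i ≠ j → G i j ∈ Set.Ico (-1 : ℝ) 1)
    (hpos : (Finset.univ.filter fun i => 0 < hG.eigenvalues i).card = n)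
    (hneg : (Finset.univ.filter fun i => hG.eigenvalues i < 0).card = 1)
    (hcof : ∀ i j, i ≠ j → 0 < cofactor G i j) :
    ∃ u : Fin (n + 1) → (Fin (n + 1) → ℝ),
      (∀ i j, lform (u i) (u j) = G i j) ∧
      ∀ w v : Fin (n + 1) → (Fin (n + 1) → ℝ),
        (∀ i, w i = ∑ k, cofactor G i k • u k) →
        (∀ i, v i = if cofactor G i i ≠ 0
            then (Real.sqrt |cofactor G i i * G.det|)⁻¹ • w i else w i) →
        LinearIndependent ℝ v ∧
        (∀ i j, i ≠ j → lform (v i) (v j) < 0) ∧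
        (∀ i, 0 < cofactor G i i → lform (v i) (v i) = -1) ∧
        (∀ i, cofactor G i i = 0 → lform (v i) (v i) = 0 ∧ v i ≠ 0) ∧
        (∀ i, cofactor G i i < 0 → lform (v i) (v i) = 1) :=
  stmt0_general n G hG hpos hneg hcof
end
end

section
/- Let u_1, u_2, u_3, u_4 ∈ ℝ⁴ with ⟨u_i, u_i⟩ = 1 for all i, let G be the 4×4 matrix with G_{ij} = ⟨u_i, u_j⟩, and assume det G < 0, c_{33} > 0, and c_{44} < 0. Define w_i := Σ_{k=1}^{4} c_{ik} u_k, v_3 := w_3 / √(−c_{33} · det G), and v_4 := w_4 / √(c_{44} · det G). Then ⟨v_3, v_3⟩ = −1, ⟨v_4, v_4⟩ = 1, and ⟨v_3, v_4⟩ = −c_{34} / √(−c_{33} c_{44}). -/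
/-!
Since `G * adjugate G = det G • 1` and `cofactor G i k = adjugate G k i`, the vectors
`w i = ∑ k, cofactor G i k • u k` satisfy `⟨w i, w j⟩ = cofactor G i j * det G`: their Gram
matrix is `det G` times the cofactor matrix. The three identities are then this formula
divided by the normalizing square roots, whose radicands are positive by the sign hypotheses.
-/

noncomputable section
open Matrix BigOperators

lemma cofactor_eq_adjugate {n : ℕ} (G : Matrix (Fin (n + 1)) (Fin (n + 1)) ℝ)
    (i j : Fin (n + 1)) : cofactor G i j = adjugate G j i := by
  rw [cofactor, adjugate_fin_succ_eq_det_submatrix]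

lemma sum_cofactor_mul {n : ℕ} (G : Matrix (Fin (n + 1)) (Fin (n + 1)) ℝ)
    (j k : Fin (n + 1)) : ∑ l, cofactor G j l * G k l = if k = j then G.det else 0 := by
  simp_rw [cofactor_eq_adjugate, mul_comm (adjugate G _ _), ← mul_apply, mul_adjugate,
    Matrix.smul_apply, one_apply, smul_eq_mul, mul_boole]

section Lorentz

variable {n : ℕ} {ι : Type*} [Fintype ι]

lemma lform_sum_smul_left (a : ι → ℝ) (u : ι → Fin (n + 1) → ℝ) (y : Fin (n + 1) → ℝ) :
    lform (∑ k, a k • u k) y = ∑ k, a k * lform (u k) y := by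
  simp only [lform, Finset.sum_apply, Pi.smul_apply, smul_eq_mul, Finset.mul_sum,
    Finset.sum_mul]
  rw [Finset.sum_comm]
  exact Finset.sum_congr rfl fun _ _ => Finset.sum_congr rfl fun _ _ => by ring

lemma lform_sum_smul_right (x : Fin (n + 1) → ℝ) (b : ι → ℝ) (u : ι → Fin (n + 1) → ℝ) :
    lform x (∑ l, b l • u l) = ∑ l, b l * lform x (u l) := by
  simp only [lform, Finset.sum_apply, Pi.smul_apply, smul_eq_mul, Finset.mul_sum]
  rw [Finset.sum_comm]
  exact Finset.sum_congr rfl fun _ _ => Finset.sum_congr rfl fun _ _ => by ring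

lemma lform_smul_smul (r s : ℝ) (x y : Fin (n + 1) → ℝ) :
    lform (r • x) (s • y) = r * s * lform x y := by
  simp only [lform, Pi.smul_apply, smul_eq_mul, Finset.mul_sum]
  exact Finset.sum_congr rfl fun _ _ => by ring

lemma lform_sum_cofactor_smul {u : Fin (n + 1) → Fin (n + 1) → ℝ}
    {G : Matrix (Fin (n + 1)) (Fin (n + 1)) ℝ} (hG : ∀ i j, G i j = lform (u i) (u j))
    (i j : Fin (n + 1)) :
    lform (∑ k, cofactor G i k • u k) (∑ l, cofactor G j l • u l) = cofactor G i j * G.det := by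
  simp_rw [lform_sum_smul_left, lform_sum_smul_right, ← hG, sum_cofactor_mul, mul_ite,
    mul_zero, Finset.sum_ite_eq', Finset.mem_univ, if_true]

end Lorentz

lemma sqrt_neg_mul_mul_sqrt_mul {a b d : ℝ} (ha : 0 ≤ a) (hd : d ≤ 0) :
    √(-(a * d)) * √(b * d) = √(-(a * b)) * -d := by
  rw [← Real.sqrt_mul (by nlinarith), show -(a * d) * (b * d) = -(a * b) * (-d) ^ 2 by ring,
    Real.sqrt_mul' _ (sq_nonneg _), Real.sqrt_sq (neg_nonneg.mpr hd)]

theorem stmt7_general (u : Fin 4 → (Fin 4 → ℝ))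
    (G : Matrix (Fin 4) (Fin 4) ℝ)
    (hGdef : ∀ i j, G i j = lform (u i) (u j))
    (hdet : G.det < 0)
    (h33 : 0 < cofactor G 2 2) (h44 : cofactor G 3 3 < 0) :
    let w : Fin 4 → (Fin 4 → ℝ) := fun i => ∑ k, cofactor G i k • u k
    let v3 : Fin 4 → ℝ := (Real.sqrt (-(cofactor G 2 2 * G.det)))⁻¹ • w 2
    let v4 : Fin 4 → ℝ := (Real.sqrt (cofactor G 3 3 * G.det))⁻¹ • w 3
    lform v3 v3 = -1 ∧ lform v4 v4 = 1 ∧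
    lform v3 v4 = -cofactor G 2 3 / Real.sqrt (-(cofactor G 2 2 * cofactor G 3 3)) := by
  intro w v3 v4
  have hw (i j : Fin 4) : lform (w i) (w j) = cofactor G i j * G.det :=
    lform_sum_cofactor_smul hGdef i j
  have h3 : 0 < -(cofactor G 2 2 * G.det) := by nlinarith
  have h4 : 0 < cofactor G 3 3 * G.det := by nlinarith
  have h34 : 0 < √(-(cofactor G 2 2 * cofactor G 3 3)) := Real.sqrt_pos.mpr (by nlinarith)
  refine ⟨?_, ?_, ?_⟩
  · rw [lform_smul_smul, hw, ← mul_inv, Real.mul_self_sqrt h3.le, inv_mul_eq_div, div_neg,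
      div_self (neg_pos.mp h3).ne]
  · rw [lform_smul_smul, hw, ← mul_inv, Real.mul_self_sqrt h4.le, inv_mul_eq_div,
      div_self h4.ne']
  · rw [lform_smul_smul, hw, ← mul_inv, sqrt_neg_mul_mul_sqrt_mul h33.le hdet.le]
    field_simp [h34.ne', hdet.ne]

theorem stmt7 (u : Fin 4 → (Fin 4 → ℝ))
    (hunit : ∀ i, lform (u i) (u i) = 1)
    (G : Matrix (Fin 4) (Fin 4) ℝ)
    (hGdef : ∀ i j, G i j = lform (u i) (u j))
    (hdet : G.det < 0)
    (h33 : 0 < cofactor G 2 2) (h44 : cofactor G 3 3 < 0) :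
    let w : Fin 4 → (Fin 4 → ℝ) := fun i => ∑ k, cofactor G i k • u k
    let v3 : Fin 4 → ℝ := (Real.sqrt (-(cofactor G 2 2 * G.det)))⁻¹ • w 2
    let v4 : Fin 4 → ℝ := (Real.sqrt (cofactor G 3 3 * G.det))⁻¹ • w 3
    lform v3 v3 = -1 ∧ lform v4 v4 = 1 ∧
    lform v3 v4 = -cofactor G 2 3 / Real.sqrt (-(cofactor G 2 2 * cofactor G 3 3)) :=
  stmt7_general u G hGdef hdet h33 h44
end
end
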